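/- Let n₀, n₁, n₂ ∈ ℝ³ with ‖n_i‖ ≤ 1, and let M⁰, M¹, M² be the corresponding unbiased binary qubit POVMs with effects M^i_z = (1/2)(I + (−1)^z n_i·σ), z ∈ {0,1}. Then the following are equivalent: (1) for every permutation (i,j,k) of (0,1,2) and every q ∈ [0,1], the binary qubit POVMs M^i and (q M^j_z + (1−q) M^k_z)_{z∈{0,1}} are not jointly measurable; (2) for every permutation (i,j,k) of (0,1,2) and every q ∈ [0,1], ‖n_i + q n_j + (1−q) n_k‖ + ‖n_i − q n_j − (1−q) n_k‖ > 2. -/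

import Mathlib

open Matrix Finset
open scoped ComplexOrder

noncomputable section

/-- A `d`-outcome POVM on `ℂ^n`: positive semidefinite effects summing to the identity. -/
def IsPOVM {n d : ℕ} (M : Fin d → Matrix (Fin n) (Fin n) ℂ) : Prop :=
  (∀ z, (M z).PosSemidef) ∧ ∑ z, M z = 1

/-- Coarse-graining of a `d`-outcome POVM along `f : Fin d → Fin k`. -/
def coarseGrain {n d k : ℕ} (M : Fin d → Matrix (Fin n) (Fin n) ℂ) (f : Fin d → Fin k)
    (z' : Fin k) : Matrix (Fin n) (Fin n) ℂ :=
  ∑ z ∈ Finset.univ.filter (fun z => f z = z'), M z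

/-- Compatibility of a finite family of `d`-outcome POVMs: existence of a parent POVM
`G` together with classical post-processings `p`. -/
def Compatible {n m d : ℕ} (M : Fin m → Fin d → Matrix (Fin n) (Fin n) ℂ) : Prop :=
  ∃ (L : ℕ) (G : Fin L → Matrix (Fin n) (Fin n) ℂ) (p : Fin m → Fin d → Fin L → ℝ),
    (∀ l, (G l).PosSemidef) ∧ (∑ l, G l = 1) ∧
    (∀ x z l, 0 ≤ p x z l) ∧ (∀ x l, ∑ z, p x z l = 1) ∧
    (∀ x z, M x z = ∑ l, (p x z l : ℂ) • G l)

/-- Joint measurability of two POVMs via a joint parent POVM with marginals `A` and `B`. -/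
def JointlyMeasurable {n a b : ℕ} (A : Fin a → Matrix (Fin n) (Fin n) ℂ)
    (B : Fin b → Matrix (Fin n) (Fin n) ℂ) : Prop :=
  ∃ G : Fin a → Fin b → Matrix (Fin n) (Fin n) ℂ,
    (∀ i j, (G i j).PosSemidef) ∧ (∑ i, ∑ j, G i j = 1) ∧
    (∀ i, A i = ∑ j, G i j) ∧ (∀ j, B j = ∑ i, G i j)

/-- The Pauli matrix `σ_x`. -/
def σx : Matrix (Fin 2) (Fin 2) ℂ := !![0, 1; 1, 0]

/-- The Pauli matrix `σ_y`. -/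
def σy : Matrix (Fin 2) (Fin 2) ℂ := !![0, -Complex.I; Complex.I, 0]

/-- The Pauli matrix `σ_z`. -/
def σz : Matrix (Fin 2) (Fin 2) ℂ := !![1, 0; 0, -1]

/-- The unbiased binary qubit POVM with Bloch vector `v`: effects `(1/2)(I + (−1)^z v·σ)`. -/
def bloch (v : EuclideanSpace ℝ (Fin 3)) (z : Fin 2) : Matrix (Fin 2) (Fin 2) ℂ :=
  (1/2 : ℂ) • (1 + ((-1 : ℂ)) ^ (z : ℕ) •
    ((v 0 : ℂ) • σx + (v 1 : ℂ) • σy + (v 2 : ℂ) • σz))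

/-!
A Hermitian qubit operator is `t • 1 + v·σ`, and it is positive semidefinite iff `‖v‖ ≤ t`,
its trace being `2t` and its determinant `t² - ‖v‖²`. Writing the four effects of a joint POVM
of `bloch a` and `bloch b` in this form, the marginal conditions force `a + b = 2 (v₀₀ - v₁₁)` and
`a - b = 2 (v₀₁ - v₁₀)` while the `t`'s add up to `1`, so the triangle inequality gives Busch's
criterion `‖a + b‖ + ‖a - b‖ ≤ 2`; conversely, under the criterion the weights `‖a + b‖ / 4` and
`(2 - ‖a + b‖) / 4` define a joint POVM. Since `bloch` is affine in the Bloch vector, mixing `M^j`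
and `M^k` gives the POVM of `q n_j + (1 - q) n_k`, and the theorem is the criterion for each pair.
-/
theorem Matrix.IsHermitian.posSemidef_iff_trace_nonneg_and_det_nonneg {𝕜 : Type*} [RCLike 𝕜]
    {A : Matrix (Fin 2) (Fin 2) 𝕜} (hA : A.IsHermitian) :
    A.PosSemidef ↔ 0 ≤ A.trace ∧ 0 ≤ A.det := by
  refine ⟨fun h => ⟨h.trace_nonneg, h.det_nonneg⟩, fun ⟨htr, hdet⟩ => ?_⟩
  rw [hA.trace_eq_sum_eigenvalues, Fin.sum_univ_two, ← RCLike.ofReal_add,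
    RCLike.ofReal_nonneg] at htr
  rw [hA.det_eq_prod_eigenvalues, Fin.prod_univ_two, ← RCLike.ofReal_mul,
    RCLike.ofReal_nonneg] at hdet
  rw [hA.posSemidef_iff_eigenvalues_nonneg, Pi.le_def, Fin.forall_fin_two, Pi.zero_apply,
    Pi.zero_apply]
  constructor <;> nlinarith

def qubitOp (t : ℝ) (v : EuclideanSpace ℝ (Fin 3)) : Matrix (Fin 2) (Fin 2) ℂ :=
  (t : ℂ) • 1 + ((v 0 : ℂ) • σx + (v 1 : ℂ) • σy + (v 2 : ℂ) • σz)

theorem qubitOp_eq_matrix (t : ℝ) (v : EuclideanSpace ℝ (Fin 3)) :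
    qubitOp t v = !![(t + v 2 : ℂ), v 0 - v 1 * Complex.I; v 0 + v 1 * Complex.I, t - v 2] := by
  ext i j
  fin_cases i <;> fin_cases j <;> simp [qubitOp, σx, σy, σz] <;> ring

theorem qubitOp_add (t t' : ℝ) (v v' : EuclideanSpace ℝ (Fin 3)) :
    qubitOp t v + qubitOp t' v' = qubitOp (t + t') (v + v') := by
  simp only [qubitOp, PiLp.add_apply, Complex.ofReal_add]
  module

theorem qubitOp_inj {t t' : ℝ} {v v' : EuclideanSpace ℝ (Fin 3)} :
    qubitOp t v = qubitOp t' v' ↔ t = t' ∧ v = v' := by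
  refine ⟨fun h => ?_, fun ⟨ht, hv⟩ => ht ▸ hv ▸ rfl⟩
  simp only [qubitOp_eq_matrix] at h
  have h00 := congrFun₂ h 0 0
  have h10 := congrFun₂ h 1 0
  have h11 := congrFun₂ h 1 1
  simp [Complex.ext_iff] at h00 h10 h11
  refine ⟨by linarith, ?_⟩
  ext i
  fin_cases i <;> simp [h10]; linarith

theorem isHermitian_qubitOp (t : ℝ) (v : EuclideanSpace ℝ (Fin 3)) :
    (qubitOp t v).IsHermitian := by
  rw [qubitOp_eq_matrix]
  ext i j
  fin_cases i <;> fin_cases j <;> simp [Complex.ext_iff]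

theorem Matrix.IsHermitian.exists_qubitOp_eq {A : Matrix (Fin 2) (Fin 2) ℂ}
    (hA : A.IsHermitian) : ∃ t v, qubitOp t v = A := by
  have h00 := hA.apply 0 0
  have h01 := hA.apply 0 1
  have h11 := hA.apply 1 1
  refine ⟨((A 0 0).re + (A 1 1).re) / 2,
    !₂[(A 1 0).re, (A 1 0).im, ((A 0 0).re - (A 1 1).re) / 2], ?_⟩
  rw [qubitOp_eq_matrix]
  simp [Complex.ext_iff] at h00 h01 h11
  ext i j
  fin_cases i <;> fin_cases j <;> simp [Complex.ext_iff] <;>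
    first | exact h01 | exact ⟨by ring, by linarith⟩

theorem posSemidef_qubitOp_iff (t : ℝ) (v : EuclideanSpace ℝ (Fin 3)) :
    (qubitOp t v).PosSemidef ↔ ‖v‖ ≤ t := by
  have hnorm : ‖v‖ ^ 2 = v 0 ^ 2 + v 1 ^ 2 + v 2 ^ 2 := by
    simp [EuclideanSpace.norm_sq_eq, Fin.sum_univ_three]
  have htr : (qubitOp t v).trace = (2 * t : ℝ) := by
    rw [qubitOp_eq_matrix, trace_fin_two_of]
    push_cast
    ring
  have hdet : (qubitOp t v).det = (t ^ 2 - ‖v‖ ^ 2 : ℝ) := by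
    rw [qubitOp_eq_matrix, det_fin_two_of, hnorm]
    push_cast
    linear_combination (v 1 : ℂ) ^ 2 * Complex.I_sq
  rw [(isHermitian_qubitOp t v).posSemidef_iff_trace_nonneg_and_det_nonneg, htr, hdet,
    Complex.zero_le_real, Complex.zero_le_real]
  constructor
  · rintro ⟨htr_nonneg, hdet_nonneg⟩
    exact (abs_le_of_sq_le_sq' (by linarith) (by linarith)).2
  · intro h
    constructor <;> nlinarith [norm_nonneg v]

theorem bloch_eq_qubitOp (v : EuclideanSpace ℝ (Fin 3)) (z : Fin 2) :
    bloch v z = qubitOp (1 / 2) (((-1) ^ (z : ℕ) / 2 : ℝ) • v) := by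
  simp only [bloch, qubitOp, PiLp.smul_apply, smul_eq_mul, Complex.ofReal_mul]
  push_cast
  module

theorem sum_bloch (v : EuclideanSpace ℝ (Fin 3)) : ∑ z, bloch v z = 1 := by
  simp only [Fin.sum_univ_two, bloch]
  norm_num
  module

theorem smul_bloch_add_one_sub_smul_bloch (q : ℝ) (v w : EuclideanSpace ℝ (Fin 3)) (z : Fin 2) :
    (q : ℂ) • bloch v z + ((1 - q : ℝ) : ℂ) • bloch w z =
      bloch (q • v + (1 - q) • w) z := by
  simp only [bloch, PiLp.add_apply, PiLp.smul_apply, smul_eq_mul, Complex.ofReal_add,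
    Complex.ofReal_mul]
  push_cast
  module

theorem norm_add_add_norm_sub_le_two_of_jointlyMeasurable {a b : EuclideanSpace ℝ (Fin 3)}
    (h : JointlyMeasurable (bloch a) (bloch b)) : ‖a + b‖ + ‖a - b‖ ≤ 2 := by
  obtain ⟨G, hG, -, hA, hB⟩ := h
  choose t v hGtv using fun i j => (hG i j).isHermitian.exists_qubitOp_eq
  have hv : ∀ i j, ‖v i j‖ ≤ t i j := fun i j =>
    (posSemidef_qubitOp_iff _ _).1 (hGtv i j ▸ hG i j)
  have hrow : ∀ i,
      t i 0 + t i 1 = 1 / 2 ∧ v i 0 + v i 1 = ((-1) ^ (i : ℕ) / 2 : ℝ) • a := by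
    intro i
    rw [← qubitOp_inj, ← qubitOp_add, hGtv, hGtv, ← Fin.sum_univ_two, ← hA,
      bloch_eq_qubitOp]
  have hcol : ∀ j, v 0 j + v 1 j = ((-1) ^ (j : ℕ) / 2 : ℝ) • b := by
    intro j
    refine (qubitOp_inj (t := t 0 j + t 1 j) (t' := 1 / 2)).1 ?_ |>.2
    rw [← qubitOp_add, hGtv, hGtv, ← Fin.sum_univ_two (f := fun i => G i j), ← hB,
      bloch_eq_qubitOp]
  have r₀ := (hrow 0).2
  have r₁ := (hrow 1).2
  have c₀ := hcol 0
  have c₁ := hcol 1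
  simp only [Fin.val_zero, Fin.val_one, pow_zero, pow_one] at r₀ r₁ c₀ c₁
  have hsum : a + b = (2 : ℝ) • (v 0 0 - v 1 1) := by
    linear_combination (norm := module) r₁ - r₀ + c₁ - c₀
  have hdiff : a - b = (2 : ℝ) • (v 0 1 - v 1 0) := by
    linear_combination (norm := module) r₁ - r₀ + c₀ - c₁
  calc ‖a + b‖ + ‖a - b‖ = 2 * ‖v 0 0 - v 1 1‖ + 2 * ‖v 0 1 - v 1 0‖ := by
        rw [hsum, hdiff, norm_smul, norm_smul, Real.norm_two]
    _ ≤ 2 * (t 0 0 + t 1 1) + 2 * (t 0 1 + t 1 0) := by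
        gcongr <;> exact (norm_sub_le _ _).trans (add_le_add (hv _ _) (hv _ _))
    _ = 2 := by linarith [(hrow 0).1, (hrow 1).1]

theorem jointlyMeasurable_bloch_of_norm_add_add_norm_sub_le_two {a b : EuclideanSpace ℝ (Fin 3)}
    (h : ‖a + b‖ + ‖a - b‖ ≤ 2) : JointlyMeasurable (bloch a) (bloch b) := by
  set G : Fin 2 → Fin 2 → Matrix (Fin 2) (Fin 2) ℂ :=
    ![![qubitOp (‖a + b‖ / 4) ((1 / 4 : ℝ) • (a + b)),
        qubitOp ((2 - ‖a + b‖) / 4) ((1 / 4 : ℝ) • (a - b))],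
      ![qubitOp ((2 - ‖a + b‖) / 4) ((-1 / 4 : ℝ) • (a - b)),
        qubitOp (‖a + b‖ / 4) ((-1 / 4 : ℝ) • (a + b))]] with hG
  have hmarg : (∀ i, bloch a i = ∑ j, G i j) ∧ ∀ j, bloch b j = ∑ i, G i j := by
    constructor <;> intro i <;> fin_cases i <;>
    · simp only [hG, Fin.sum_univ_two, Fin.zero_eta, Fin.mk_one, Matrix.cons_val_zero,
        Matrix.cons_val_one, Fin.val_zero, Fin.val_one, pow_zero, pow_one, bloch_eq_qubitOp,
        qubitOp_add, qubitOp_inj]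
      exact ⟨by ring, by module⟩
  refine ⟨G, ?_, ?_, hmarg⟩
  · intro i j
    fin_cases i <;> fin_cases j <;>
    · simp only [hG, Fin.zero_eta, Fin.mk_one, Matrix.cons_val_zero, Matrix.cons_val_one,
        posSemidef_qubitOp_iff, norm_smul]
      norm_num
      linarith
  · simp_rw [← hmarg.1, sum_bloch]

theorem jointlyMeasurable_bloch_iff (a b : EuclideanSpace ℝ (Fin 3)) :
    JointlyMeasurable (bloch a) (bloch b) ↔ ‖a + b‖ + ‖a - b‖ ≤ 2 :=
  ⟨norm_add_add_norm_sub_le_two_of_jointlyMeasurable,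
    jointlyMeasurable_bloch_of_norm_add_add_norm_sub_le_two⟩

theorem fully_incompatible_convex_mixing_iff_busch_general
    (n : Fin 3 → EuclideanSpace ℝ (Fin 3)) :
    (∀ i j k : Fin 3, i ≠ j → j ≠ k → i ≠ k → ∀ q ∈ Set.Icc (0 : ℝ) 1,
      ¬ JointlyMeasurable (bloch (n i))
        (fun z => (q : ℂ) • bloch (n j) z + ((1 - q : ℝ) : ℂ) • bloch (n k) z)) ↔
    (∀ i j k : Fin 3, i ≠ j → j ≠ k → i ≠ k → ∀ q ∈ Set.Icc (0 : ℝ) 1,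
      ‖n i + q • n j + (1 - q) • n k‖ + ‖n i - q • n j - (1 - q) • n k‖ > 2) := by
  simp only [smul_bloch_add_one_sub_smul_bloch, jointlyMeasurable_bloch_iff, not_le, add_assoc,
    sub_sub, gt_iff_lt]

/-- Busch-type criterion: the three unbiased qubit measurements are fully incompatible w.r.t.
disjoint-convex-mixing iff `‖n_i + q n_j + (1−q) n_k‖ + ‖n_i − q n_j − (1−q) n_k‖ > 2` for all
permutations `(i,j,k)` of `(0,1,2)` and all `q ∈ [0,1]`. -/
theorem fully_incompatible_convex_mixing_iff_busch
    (n : Fin 3 → EuclideanSpace ℝ (Fin 3)) (hn : ∀ i, ‖n i‖ ≤ 1) :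
    (∀ i j k : Fin 3, i ≠ j → j ≠ k → i ≠ k → ∀ q ∈ Set.Icc (0 : ℝ) 1,
      ¬ JointlyMeasurable (bloch (n i))
        (fun z => (q : ℂ) • bloch (n j) z + ((1 - q : ℝ) : ℂ) • bloch (n k) z)) ↔
    (∀ i j k : Fin 3, i ≠ j → j ≠ k → i ≠ k → ∀ q ∈ Set.Icc (0 : ℝ) 1,
      ‖n i + q • n j + (1 - q) • n k‖ + ‖n i - q • n j - (1 - q) • n k‖ > 2) :=
  fully_incompatible_convex_mixing_iff_busch_general n
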